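/- Let T ∈ C^5⊗C^5⊗C^5 = A⊗B⊗C be a tensor such that every matrix in T(A*) ⊆ Hom(B*,C) has zero entries (i,j) for 1≤i≤4, 1≤j≤3 (i.e., only the last two columns and the last row may be nonzero). If T is concise, then T(C*) ⊆ Hom(B*,A) contains a matrix of rank at least 4. -/

import Mathlib

open TensorProduct

noncomputable section

namespace Paper

variable {A B C : Type*} [AddCommGroup A] [Module ℂ A]
  [AddCommGroup B] [Module ℂ B] [AddCommGroup C] [Module ℂ C]

/-- Action of `X ∈ End(A)` on the `A`-factor: `X ∘_A T = (X ⊗ Id_B ⊗ Id_C)(T)`. -/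
def actA (X : Module.End ℂ A) : A ⊗[ℂ] (B ⊗[ℂ] C) →ₗ[ℂ] A ⊗[ℂ] (B ⊗[ℂ] C) :=
  TensorProduct.map X LinearMap.id

/-- Action of `Y ∈ End(B)` on the `B`-factor. -/
def actB (Y : Module.End ℂ B) : A ⊗[ℂ] (B ⊗[ℂ] C) →ₗ[ℂ] A ⊗[ℂ] (B ⊗[ℂ] C) :=
  TensorProduct.map LinearMap.id (TensorProduct.map Y LinearMap.id)

/-- Action of `Z ∈ End(C)` on the `C`-factor. -/
def actC (Z : Module.End ℂ C) : A ⊗[ℂ] (B ⊗[ℂ] C) →ₗ[ℂ] A ⊗[ℂ] (B ⊗[ℂ] C) :=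
  TensorProduct.map LinearMap.id (TensorProduct.map LinearMap.id Z)

/-- Contraction of the `A`-factor against `α ∈ A*`: `T ↦ T(α) ∈ B ⊗ C`. -/
def contrA (α : Module.Dual ℂ A) : A ⊗[ℂ] (B ⊗[ℂ] C) →ₗ[ℂ] B ⊗[ℂ] C :=
  (TensorProduct.lid ℂ (B ⊗[ℂ] C)).toLinearMap ∘ₗ TensorProduct.map α LinearMap.id

/-- Contraction of the `B`-factor against `β ∈ B*`: `T ↦ T(β) ∈ A ⊗ C`. -/
def contrB (β : Module.Dual ℂ B) : A ⊗[ℂ] (B ⊗[ℂ] C) →ₗ[ℂ] A ⊗[ℂ] C :=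
  TensorProduct.map LinearMap.id
    ((TensorProduct.lid ℂ C).toLinearMap ∘ₗ TensorProduct.map β LinearMap.id)

/-- Contraction of the `C`-factor against `γ ∈ C*`: `T ↦ T(γ) ∈ A ⊗ B`. -/
def contrC (γ : Module.Dual ℂ C) : A ⊗[ℂ] (B ⊗[ℂ] C) →ₗ[ℂ] A ⊗[ℂ] B :=
  TensorProduct.map LinearMap.id
    ((TensorProduct.rid ℂ B).toLinearMap ∘ₗ TensorProduct.map LinearMap.id γ)

/-- A tensor is concise if all three flattening maps are injective. -/
def Concise (T : A ⊗[ℂ] (B ⊗[ℂ] C)) : Prop :=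
  Function.Injective (fun α : Module.Dual ℂ A => contrA α T) ∧
  Function.Injective (fun β : Module.Dual ℂ B => contrB β T) ∧
  Function.Injective (fun γ : Module.Dual ℂ C => contrC γ T)

/-- View an element of `M ⊗ N` as a linear map `M* → N`. -/
def toHom {M N : Type*} [AddCommGroup M] [Module ℂ M] [AddCommGroup N] [Module ℂ N] :
    M ⊗[ℂ] N →ₗ[ℂ] (Module.Dual ℂ M →ₗ[ℂ] N) :=
  (dualTensorHom ℂ (Module.Dual ℂ M) N).comp
    (TensorProduct.map (Module.Dual.eval ℂ M) LinearMap.id)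

/-- A triple `(X,Y,Z)` is compatible with `T` if `X∘_A T = Y∘_B T = Z∘_C T`. -/
def Compat (T : A ⊗[ℂ] (B ⊗[ℂ] C))
    (p : Module.End ℂ A × Module.End ℂ B × Module.End ℂ C) : Prop :=
  actA p.1 T = actB p.2.1 T ∧ actB p.2.1 T = actC p.2.2 T

/-- The subspace `T(A*) ⊗ A ⊆ A ⊗ B ⊗ C`. -/
def spanA (T : A ⊗[ℂ] (B ⊗[ℂ] C)) : Submodule ℂ (A ⊗[ℂ] (B ⊗[ℂ] C)) :=
  Submodule.span ℂ {x | ∃ (a : A) (α : Module.Dual ℂ A), x = a ⊗ₜ[ℂ] contrA α T}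

/-- The subspace `T(B*) ⊗ B ⊆ A ⊗ B ⊗ C` (factors in the correct positions). -/
def spanB (T : A ⊗[ℂ] (B ⊗[ℂ] C)) : Submodule ℂ (A ⊗[ℂ] (B ⊗[ℂ] C)) :=
  Submodule.span ℂ {x | ∃ (b : B) (β : Module.Dual ℂ B),
    x = (TensorProduct.leftComm ℂ B A C) (b ⊗ₜ[ℂ] contrB β T)}

/-- The subspace `T(C*) ⊗ C ⊆ A ⊗ B ⊗ C` (factors in the correct positions). -/
def spanC (T : A ⊗[ℂ] (B ⊗[ℂ] C)) : Submodule ℂ (A ⊗[ℂ] (B ⊗[ℂ] C)) :=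
  Submodule.span ℂ {x | ∃ (c : C) (γ : Module.Dual ℂ C),
    x = (TensorProduct.congr (LinearEquiv.refl ℂ A) (TensorProduct.comm ℂ C B))
      ((TensorProduct.leftComm ℂ C A B) (c ⊗ₜ[ℂ] contrC γ T))}

/-- The triple intersection `(T(A*)⊗A) ∩ (T(B*)⊗B) ∩ (T(C*)⊗C)`. -/
def tripleInt (T : A ⊗[ℂ] (B ⊗[ℂ] C)) : Submodule ℂ (A ⊗[ℂ] (B ⊗[ℂ] C)) :=
  spanA T ⊓ spanB T ⊓ spanC T

namespace Stmt17Aux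
open Paper

variable {A B C : Type*} [AddCommGroup A] [Module ℂ A]
  [AddCommGroup B] [Module ℂ B] [AddCommGroup C] [Module ℂ C]

lemma contrA_tmul (α : Module.Dual ℂ A) (a : A) (x : B ⊗[ℂ] C) :
    contrA α (a ⊗ₜ[ℂ] x) = α a • x := by
  simp [contrA]

lemma contrB_tmul (β : Module.Dual ℂ B) (a : A) (b : B) (c : C) :
    contrB β (a ⊗ₜ[ℂ] (b ⊗ₜ[ℂ] c)) = β b • (a ⊗ₜ[ℂ] c) := by
  simp [contrB, TensorProduct.tmul_smul]

lemma contrC_tmul (γ : Module.Dual ℂ C) (a : A) (b : B) (c : C) :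
    contrC γ (a ⊗ₜ[ℂ] (b ⊗ₜ[ℂ] c)) = γ c • (a ⊗ₜ[ℂ] b) := by
  simp [contrC, TensorProduct.tmul_smul]

lemma toHom_tmul (m : A) (n : B) (φ : Module.Dual ℂ A) :
    toHom (m ⊗ₜ[ℂ] n) φ = φ m • n := by
  simp [toHom]

end Stmt17Aux

end Paper

set_option maxHeartbeats 2000000 in
open Paper in
/-- if every matrix of `T(A*) ⊆ Hom(B*,C)` (`T ∈ ℂ⁵⊗ℂ⁵⊗ℂ⁵`) is zero in the
entries `(i,j)` with `i ≤ 3`, `j ≤ 2` (rows indexed by `C`, columns by the dual basis of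
`B`), and `T` is concise, then `T(C*) ⊆ Hom(B*,A)` contains a matrix of rank at least 4. -/
theorem stmt17 (T : (Fin 5 → ℂ) ⊗[ℂ] ((Fin 5 → ℂ) ⊗[ℂ] (Fin 5 → ℂ)))
    (hshape : ∀ (α : Module.Dual ℂ (Fin 5 → ℂ)) (i j : Fin 5), i.val < 4 → j.val < 3 →
      (toHom (contrA α T)) (LinearMap.proj j) i = 0)
    (hconcise : Concise T) :
    ∃ γ : Module.Dual ℂ (Fin 5 → ℂ),
      4 ≤ Module.finrank ℂ
        (LinearMap.range (toHom ((TensorProduct.comm ℂ (Fin 5 → ℂ) (Fin 5 → ℂ))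
          (contrC γ T)))) := by
  classical
  by_contra hcon
  push_neg at hcon
  have hcon' : ∀ γ : Module.Dual ℂ (Fin 5 → ℂ),
      Module.finrank ℂ (LinearMap.range (toHom
        ((TensorProduct.comm ℂ (Fin 5 → ℂ) (Fin 5 → ℂ)) (contrC γ T)))) ≤ 3 := by
    intro γ; exact Nat.lt_succ_iff.mp (hcon γ)
  -- coordinates of T
  set bA : Module.Basis (Fin 5) ℂ (Fin 5 → ℂ) := Pi.basisFun ℂ (Fin 5) with hbA
  set b3 : Module.Basis (Fin 5 × Fin 5 × Fin 5) ℂ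
      ((Fin 5 → ℂ) ⊗[ℂ] ((Fin 5 → ℂ) ⊗[ℂ] (Fin 5 → ℂ))) :=
    bA.tensorProduct (bA.tensorProduct bA) with hb3
  set t : Fin 5 → Fin 5 → Fin 5 → ℂ := fun k j i => b3.repr T (k, j, i) with ht
  have hT : T = ∑ k : Fin 5, ∑ j : Fin 5, ∑ i : Fin 5,
      t k j i • (bA k ⊗ₜ[ℂ] (bA j ⊗ₜ[ℂ] bA i)) := by
    conv_lhs => rw [← b3.sum_repr T]
    rw [Fintype.sum_prod_type]
    refine Finset.sum_congr rfl fun k _ => ?_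
    rw [Fintype.sum_prod_type]
    refine Finset.sum_congr rfl fun j _ => ?_
    refine Finset.sum_congr rfl fun i _ => ?_
    rw [hb3, Module.Basis.tensorProduct_apply, Module.Basis.tensorProduct_apply]
  have expandA : ∀ α : Module.Dual ℂ (Fin 5 → ℂ), contrA α T
      = ∑ j : Fin 5, ∑ i : Fin 5,
        (∑ k : Fin 5, α (bA k) * t k j i) • (bA j ⊗ₜ[ℂ] bA i) := by
    intro α
    conv_lhs => rw [hT]
    simp only [map_sum, map_smul, Stmt17Aux.contrA_tmul]
    rw [Finset.sum_comm]
    refine Finset.sum_congr rfl fun j _ => ?_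
    rw [Finset.sum_comm]
    refine Finset.sum_congr rfl fun i _ => ?_
    rw [Finset.sum_smul]
    refine Finset.sum_congr rfl fun k _ => ?_
    rw [smul_smul, mul_comm]
  have entA : ∀ (α : Module.Dual ℂ (Fin 5 → ℂ)) (j i : Fin 5),
      (toHom (contrA α T)) (LinearMap.proj j) i = ∑ k : Fin 5, α (bA k) * t k j i := by
    intro α j i
    rw [expandA α]
    simp only [map_sum, map_smul, LinearMap.sum_apply, LinearMap.smul_apply,
      Stmt17Aux.toHom_tmul, Finset.sum_apply, Pi.smul_apply, hbA, Pi.basisFun_apply,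
      LinearMap.proj_apply, Pi.single_apply, smul_eq_mul, mul_ite, mul_one, mul_zero,
      ite_mul, zero_mul, Finset.sum_ite_eq, Finset.sum_ite_eq', Finset.mem_univ, if_true]
  have hproj : ∀ k k' : Fin 5, (LinearMap.proj k : (Fin 5 → ℂ) →ₗ[ℂ] ℂ) (bA k')
      = if k = k' then 1 else 0 := by
    intro k k'
    simp only [hbA, Pi.basisFun_apply, LinearMap.proj_apply, Pi.single_apply]
  have hsh : ∀ k j i : Fin 5, i.val < 4 → j.val < 3 → t k j i = 0 := by
    intro k j i hi hj
    have h := hshape (LinearMap.proj k) i j hi hj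
    rw [entA] at h
    simpa [hproj, ite_mul, zero_mul, one_mul, Finset.sum_ite_eq, Finset.sum_ite_eq'] using h
  have expandB : ∀ β : Module.Dual ℂ (Fin 5 → ℂ), contrB β T
      = ∑ k : Fin 5, ∑ i : Fin 5,
        (∑ j : Fin 5, β (bA j) * t k j i) • (bA k ⊗ₜ[ℂ] bA i) := by
    intro β
    conv_lhs => rw [hT]
    simp only [map_sum, map_smul, Stmt17Aux.contrB_tmul]
    refine Finset.sum_congr rfl fun k _ => ?_
    rw [Finset.sum_comm]
    refine Finset.sum_congr rfl fun i _ => ?_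
    rw [Finset.sum_smul]
    refine Finset.sum_congr rfl fun j _ => ?_
    rw [smul_smul, mul_comm]
  set col : Module.Dual ℂ (Fin 5 → ℂ) → Fin 5 → (Fin 5 → ℂ) :=
    fun γ j => ∑ k : Fin 5, (∑ i : Fin 5, γ (bA i) * t k j i) • bA k with hcol
  have colval : ∀ (γ : Module.Dual ℂ (Fin 5 → ℂ)) (j k : Fin 5),
      col γ j k = ∑ i : Fin 5, γ (bA i) * t k j i := by
    intro γ j k
    rw [hcol]
    simp only [Finset.sum_apply, Pi.smul_apply, hbA, Pi.basisFun_apply, Pi.single_apply,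
      smul_eq_mul, mul_ite, mul_one, mul_zero]
    rw [Finset.sum_ite_eq]
    simp
  have expandC : ∀ γ : Module.Dual ℂ (Fin 5 → ℂ), contrC γ T
      = ∑ k : Fin 5, ∑ j : Fin 5,
        (∑ i : Fin 5, γ (bA i) * t k j i) • (bA k ⊗ₜ[ℂ] bA j) := by
    intro γ
    conv_lhs => rw [hT]
    simp only [map_sum, map_smul, Stmt17Aux.contrC_tmul]
    refine Finset.sum_congr rfl fun k _ => Finset.sum_congr rfl fun j _ => ?_
    rw [Finset.sum_smul]
    refine Finset.sum_congr rfl fun i _ => ?_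
    rw [smul_smul, mul_comm]
  have mapC : ∀ (γ φ : Module.Dual ℂ (Fin 5 → ℂ)),
      toHom ((TensorProduct.comm ℂ (Fin 5 → ℂ) (Fin 5 → ℂ)) (contrC γ T)) φ
        = ∑ j : Fin 5, φ (bA j) • col γ j := by
    intro γ φ
    rw [expandC γ]
    simp only [map_sum, map_smul, TensorProduct.comm_tmul, LinearMap.sum_apply,
      LinearMap.smul_apply, Stmt17Aux.toHom_tmul]
    rw [Finset.sum_comm]
    refine Finset.sum_congr rfl fun j _ => ?_
    rw [hcol, Finset.smul_sum]
    refine Finset.sum_congr rfl fun k _ => ?_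
    rw [smul_smul, smul_smul]
    congr 1
    ring
  have col_mem : ∀ (γ : Module.Dual ℂ (Fin 5 → ℂ)) (j : Fin 5),
      col γ j ∈ LinearMap.range (toHom
        ((TensorProduct.comm ℂ (Fin 5 → ℂ) (Fin 5 → ℂ)) (contrC γ T))) := by
    intro γ j
    refine ⟨LinearMap.proj j, ?_⟩
    have hstep : ∀ j' : Fin 5, (LinearMap.proj j : (Fin 5 → ℂ) →ₗ[ℂ] ℂ) (bA j') • col γ j'
        = (if j = j' then (1:ℂ) else 0) • col γ j' := fun j' => by rw [hproj]
    rw [mapC, Finset.sum_congr rfl fun j' _ => hstep j']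
    simp [ite_smul, Finset.sum_ite_eq]
  have hzeroB : contrB (0 : Module.Dual ℂ (Fin 5 → ℂ)) T = 0 := by
    rw [expandB]; simp
  have hzeroA : contrA (0 : Module.Dual ℂ (Fin 5 → ℂ)) T = 0 := by
    rw [expandA]; simp
  set emb : Fin 3 → Fin 5 := fun j => j.castLE (by norm_num) with hemb
  have hembv : ∀ j : Fin 3, (emb j).val = j.val := fun j => rfl
  set u : Fin 5 → (Fin 5 → ℂ) := fun j k => t k j 4 with hu
  have hind : LinearIndependent ℂ (fun j : Fin 3 => u (emb j)) := by
    rw [Fintype.linearIndependent_iff]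
    intro g hg
    set β : Module.Dual ℂ (Fin 5 → ℂ) := ∑ j : Fin 3, g j • LinearMap.proj (emb j) with hβ
    have hβval : ∀ j' : Fin 5, β (bA j')
        = ∑ j : Fin 3, g j * (if emb j = j' then 1 else 0) := by
      intro j'
      rw [hβ]
      simp only [LinearMap.sum_apply, LinearMap.smul_apply, smul_eq_mul]
      exact Finset.sum_congr rfl fun j _ => by rw [hproj]
    have hkey : ∀ k i : Fin 5, (∑ j' : Fin 5, β (bA j') * t k j' i)
        = ∑ j : Fin 3, g j * t k (emb j) i := by
      intro k i
      rw [Finset.sum_congr rfl fun j' (_ : j' ∈ Finset.univ) => by rw [hβval j', Finset.sum_mul]]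
      rw [Finset.sum_comm]
      refine Finset.sum_congr rfl fun j _ => ?_
      simp [ite_mul, mul_assoc, Finset.sum_ite_eq]
    have h0 : contrB β T = 0 := by
      rw [expandB]
      refine Finset.sum_eq_zero fun k _ => Finset.sum_eq_zero fun i _ => ?_
      rw [hkey k i]
      rcases lt_or_ge i.val 4 with hi | hi
      · rw [Finset.sum_eq_zero fun j _ => ?_, zero_smul]
        rw [hsh k (emb j) i hi (by rw [hembv]; omega), mul_zero]
      · have hi4 : i = 4 := by
          have := i.isLt; exact Fin.ext (by omega)
        subst hi4
        have hgk := congrFun hg k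
        simp only [Finset.sum_apply, Pi.smul_apply, Pi.zero_apply, smul_eq_mul, hu] at hgk
        rw [show (∑ j : Fin 3, g j * t k (emb j) 4) = 0 from hgk, zero_smul]
    have hβ0 : β = 0 := hconcise.2.1 (show contrB β T = contrB 0 T by rw [h0, hzeroB])
    intro j0
    have := congrArg (fun φ : Module.Dual ℂ (Fin 5 → ℂ) => φ (bA (emb j0))) hβ0
    simp only [LinearMap.zero_apply] at this
    rw [hβval (emb j0)] at this
    have hcol3 : ∀ j : Fin 3, (if emb j = emb j0 then (1:ℂ) else 0)
        = if j = j0 then 1 else 0 := by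
      intro j
      by_cases h : j = j0
      · subst h; simp
      · rw [if_neg h, if_neg (fun hc => h (by
          have : (emb j).val = (emb j0).val := by rw [hc]
          rw [hembv, hembv] at this
          exact Fin.ext this))]
    rw [Finset.sum_congr rfl fun j _ => by rw [hcol3 j]] at this
    simpa [mul_ite, Finset.sum_ite_eq'] using this
  set U : Submodule ℂ (Fin 5 → ℂ) :=
    Submodule.span ℂ (Set.range fun j : Fin 3 => u (emb j)) with hU
  have hUrank : Module.finrank ℂ U = 3 := by
    rw [hU, finrank_span_eq_card hind, Fintype.card_fin]
  have keycol : ∀ γ : Module.Dual ℂ (Fin 5 → ℂ), γ (bA 4) = 1 →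
      ∀ j : Fin 5, col γ j ∈ U := by
    intro γ hγ4
    have hcolsmall : ∀ j0 : Fin 3, col γ (emb j0) = u (emb j0) := by
      intro j0
      funext k
      rw [colval]
      rw [Finset.sum_eq_single (4 : Fin 5)]
      · rw [hγ4, one_mul]
      · intro b _ hb
        rw [hsh k (emb j0) b ?_ ?_, mul_zero]
        · have h5 := b.isLt
          have hbv : b.val ≠ 4 := fun h => hb (Fin.ext h)
          omega
        · rw [hembv]; omega
      · intro h; exact absurd (Finset.mem_univ _) h
    have hUle : U ≤ LinearMap.range (toHom
        ((TensorProduct.comm ℂ (Fin 5 → ℂ) (Fin 5 → ℂ)) (contrC γ T))) := by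
      rw [hU]
      refine Submodule.span_le.mpr ?_
      rintro x ⟨j0, rfl⟩
      have hm := col_mem γ (emb j0)
      rw [hcolsmall j0] at hm
      exact hm
    have heq : U = LinearMap.range (toHom
        ((TensorProduct.comm ℂ (Fin 5 → ℂ) (Fin 5 → ℂ)) (contrC γ T))) :=
      Submodule.eq_of_le_of_finrank_le hUle (by rw [hUrank]; exact hcon' γ)
    intro j
    rw [heq]
    exact col_mem γ j
  have h4mem : ∀ j : Fin 5, (fun k => t k j 4) ∈ U := by
    intro j
    have hγ4 : (LinearMap.proj (4 : Fin 5) : Module.Dual ℂ (Fin 5 → ℂ)) (bA 4) = 1 := by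
      rw [hproj]; simp
    have hc : col (LinearMap.proj (4 : Fin 5)) j = fun k => t k j 4 := by
      funext k
      rw [colval]
      rw [Finset.sum_eq_single (4 : Fin 5)]
      · rw [hproj]; simp
      · intro b _ hb
        rw [hproj, if_neg fun h => hb h.symm, zero_mul]
      · intro h; exact absurd (Finset.mem_univ _) h
    rw [← hc]
    exact keycol _ hγ4 j
  have hw : ∀ j i : Fin 5, (fun k => t k j i) ∈ U := by
    intro j i
    by_cases hi : i = 4
    · subst hi; exact h4mem j
    · have hγ' : ∃ γ' : Module.Dual ℂ (Fin 5 → ℂ),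
          γ' = (LinearMap.proj (4 : Fin 5) : Module.Dual ℂ (Fin 5 → ℂ))
            + (LinearMap.proj i : Module.Dual ℂ (Fin 5 → ℂ)) := ⟨_, rfl⟩
      obtain ⟨γ', hγ'⟩ := hγ'
      have hγ4 : γ' (bA 4) = 1 := by
        rw [hγ', LinearMap.add_apply, hproj, hproj, if_pos rfl, if_neg hi]
        norm_num
      have hc : col γ' j = (fun k => t k j 4) + (fun k => t k j i) := by
        funext k
        rw [Pi.add_apply, colval]
        have hsplit : ∀ i' : Fin 5, γ' (bA i') * t k j i'
            = (if (4 : Fin 5) = i' then (1:ℂ) else 0) * t k j i'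
              + (if i = i' then (1:ℂ) else 0) * t k j i' := by
          intro i'
          rw [hγ', LinearMap.add_apply, hproj, hproj, add_mul]
        rw [Finset.sum_congr rfl fun i' _ => hsplit i', Finset.sum_add_distrib]
        congr 1
        · simp [ite_mul, Finset.sum_ite_eq]
        · simp [ite_mul, Finset.sum_ite_eq]
      have hmem := keycol _ hγ4 j
      rw [hc] at hmem
      have hsub := U.sub_mem hmem (h4mem j)
      simpa using hsub
  have hUtop : U < ⊤ := by
    rcases lt_or_eq_of_le (le_top : U ≤ ⊤) with h | h
    · exact h
    · exfalso
      have h5 : Module.finrank ℂ U = Module.finrank ℂ (Fin 5 → ℂ) := by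
        rw [h]; exact finrank_top ℂ _
      rw [hUrank] at h5
      simp [Module.finrank_pi] at h5
  obtain ⟨f, hf0, hfmap⟩ :=
    Submodule.exists_dual_map_eq_bot_of_lt_top hUtop inferInstance
  have hfU : ∀ x ∈ U, f x = 0 := by
    intro x hx
    have hmem : f x ∈ U.map f := Submodule.mem_map_of_mem hx
    rwa [hfmap, Submodule.mem_bot] at hmem
  have hA0 : contrA f T = 0 := by
    rw [expandA]
    refine Finset.sum_eq_zero fun j _ => Finset.sum_eq_zero fun i _ => ?_
    have hvec : (fun k => t k j i) = ∑ k : Fin 5, t k j i • bA k := by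
      funext k'
      simp [hbA, Pi.single_apply, mul_ite, Finset.sum_ite_eq, Finset.sum_ite_eq']
    have hfv : (∑ k : Fin 5, f (bA k) * t k j i) = f (fun k => t k j i) := by
      rw [hvec, map_sum]
      refine Finset.sum_congr rfl fun k _ => ?_
      rw [map_smul, smul_eq_mul, mul_comm]
    rw [hfv, hfU _ (hw j i), zero_smul]
  exact hf0 (hconcise.1 (show contrA f T = contrA 0 T by rw [hA0, hzeroA]))
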